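/- arXiv:1604.03774 — 2 statements merged into one kernel-verified Lean document; each statement's English description precedes it below -/
import Mathlib

section
/- Let C_i be a linear [n, k_i, d_i] code over the finite field F_q for 1 ≤ i ≤ s, and let A be an s×m matrix over F_q that is non-singular by columns (NSC) and upper-triangular (a_{ij} = 0 whenever i > j). Then the matrix-product code C = [C_1,…,C_s]A has minimum distance exactly d(C) = min{ m·d_1, (m−1)·d_2, …, (m−s+1)·d_s }. -/
open Polynomial Matrix Finset

variable {F : Type*} [Field F]

/-- The minimum (Hamming) distance of a linear code `C ⊆ F^ι`:
the least Hamming weight of a nonzero codeword. -/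
noncomputable def minDist {ι : Type*} [Fintype ι] [DecidableEq F]
    (C : Submodule F (ι → F)) : ℕ :=
  sInf {d | ∃ x ∈ C, x ≠ 0 ∧ hammingNorm x = d}

/-- The Euclidean dual of a linear code. -/
def dualCode {ι : Type*} [Fintype ι] (C : Submodule F (ι → F)) :
    Submodule F (ι → F) where
  carrier := {a | ∀ b ∈ C, ∑ i, a i * b i = 0}
  add_mem' := by
    intro a b ha hb c hc
    simp only [Pi.add_apply, add_mul, Finset.sum_add_distrib,
      ha c hc, hb c hc, add_zero]
  zero_mem' := by
    intro b hb
    simp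
  smul_mem' := by
    intro r a ha b hb
    simp only [Pi.smul_apply, smul_eq_mul, mul_assoc, ← Finset.mul_sum,
      ha b hb, mul_zero]

/-- `C` is a linear complementary dual (LCD) code. -/
def IsLCD {ι : Type*} [Fintype ι] (C : Submodule F (ι → F)) : Prop :=
  C ⊓ dualCode C = ⊥

/-- The Hermitian dual (with respect to `⟨a,b⟩ = ∑ i, a i * (b i)^l`) of a linear code. -/
def hermitianDual (l : ℕ) {ι : Type*} [Fintype ι] (C : Submodule F (ι → F)) :
    Submodule F (ι → F) where
  carrier := {a | ∀ b ∈ C, ∑ i, a i * (b i) ^ l = 0}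
  add_mem' := by
    intro a b ha hb c hc
    simp only [Pi.add_apply, add_mul, Finset.sum_add_distrib,
      ha c hc, hb c hc, add_zero]
  zero_mem' := by
    intro b hb
    simp
  smul_mem' := by
    intro r a ha b hb
    simp only [Pi.smul_apply, smul_eq_mul, mul_assoc, ← Finset.mul_sum,
      ha b hb, mul_zero]

/-- `C` is a Hermitian linear complementary dual code. -/
def IsHermitianLCD (l : ℕ) {ι : Type*} [Fintype ι] (C : Submodule F (ι → F)) : Prop :=
  C ⊓ hermitianDual l C = ⊥

/-- The matrix-product code `[C_1, …, C_s]·A`: all concatenated vectors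
`(∑ i a_{i1} c_i, …, ∑ i a_{im} c_i)` with `c_i ∈ C_i`; coordinates are indexed by
`Fin m × Fin n` (block `j`, position `t` within block). -/
def matrixProductCode {s m n : ℕ} (A : Matrix (Fin s) (Fin m) F)
    (C : Fin s → Submodule F (Fin n → F)) :
    Submodule F (Fin m × Fin n → F) where
  carrier := {x | ∃ c : Fin s → (Fin n → F), (∀ i, c i ∈ C i) ∧
    x = fun p => ∑ i, A i p.1 * c i p.2}
  add_mem' := by
    rintro x y ⟨c, hc, rfl⟩ ⟨d, hd, rfl⟩
    refine ⟨fun i => c i + d i, fun i => (C i).add_mem (hc i) (hd i), ?_⟩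
    funext p
    simp [mul_add, Finset.sum_add_distrib]
  zero_mem' := ⟨0, fun i => (C i).zero_mem, by funext p; simp⟩
  smul_mem' := by
    rintro r x ⟨c, hc, rfl⟩
    refine ⟨fun i => r • c i, fun i => (C i).smul_mem r (hc i), ?_⟩
    funext p
    simp [Finset.mul_sum, mul_left_comm]

/-- A matrix is non-singular by columns (NSC) if, for every `t ≤ s` and every strictly
increasing choice of `t` columns, the `t × t` submatrix formed from the first `t` rows
and those columns is non-singular. -/
def NSC {s m : ℕ} (A : Matrix (Fin s) (Fin m) F) : Prop :=
  ∀ (t : ℕ) (ht : t ≤ s) (j : Fin t → Fin m), StrictMono j →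
    (Matrix.of fun a b : Fin t => A (Fin.castLE ht a) (j b)).det ≠ 0

/-- The cyclic code of length `n` with generator polynomial `g` (a divisor of `Xⁿ - 1`),
viewed in `F^n` via the coefficient identification: a word `c` lies in the code iff the
associated polynomial `∑ cᵢ Xⁱ` (of degree `< n`) is a multiple of `g`. -/
def cyclicCode (n : ℕ) (g : F[X]) : Submodule F (Fin n → F) where
  carrier := {c | g ∣ ∑ i : Fin n, Polynomial.C (c i) * Polynomial.X ^ (i : ℕ)}
  add_mem' := by
    intro a b ha hb
    have h : (∑ i : Fin n, Polynomial.C ((a + b) i) * Polynomial.X ^ (i : ℕ))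
        = (∑ i : Fin n, Polynomial.C (a i) * Polynomial.X ^ (i : ℕ))
          + (∑ i : Fin n, Polynomial.C (b i) * Polynomial.X ^ (i : ℕ)) := by
      simp [add_mul, Finset.sum_add_distrib]
    simp only [Set.mem_setOf_eq] at ha hb ⊢
    rw [h]
    exact dvd_add ha hb
  zero_mem' := by simp
  smul_mem' := by
    intro r a ha
    have h : (∑ i : Fin n, Polynomial.C ((r • a) i) * Polynomial.X ^ (i : ℕ))
        = Polynomial.C r * ∑ i : Fin n, Polynomial.C (a i) * Polynomial.X ^ (i : ℕ) := by
      simp [Finset.mul_sum, mul_assoc]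
    simp only [Set.mem_setOf_eq] at ha ⊢
    rw [h]
    exact ha.mul_left _

/-- The conjugate-reciprocal polynomial
`f^⊥(x) = a₀^{-l} (a_k^l + a_{k-1}^l x + ⋯ + a₀^l x^k)` of `f = a₀ + a₁ x + ⋯ + a_k x^k`. -/
noncomputable def conjReciprocal (l : ℕ) (f : F[X]) : F[X] :=
  Polynomial.C ((f.coeff 0 ^ l)⁻¹) *
    ∑ i ∈ Finset.range (f.natDegree + 1),
      Polynomial.C (f.coeff (f.natDegree - i) ^ l) * Polynomial.X ^ i

/-!
For the upper bound, a minimum-weight word `c ∈ C_i` placed in slot `i` gives the codeword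
`(a_{ij} c)_j`, of weight `wt(row i of A) · d_i ≤ (m - i) d_i` since `A` is upper triangular
(rows are indexed from `0`). For the lower bound, let `t` be the last index with `c_t ≠ 0`. At
every position `p` in the support of `c_t`, the `m` blocks of the codeword read
`(c_i p)_i ᵥ* A`, a nonzero combination of the first `t + 1` rows of `A`; by NSC it vanishes in
at most `t` blocks, so the weight is at least `(m - t) wt(c_t) ≥ (m - t) d_t`.
-/

section HammingNorm

variable {α β M : Type*} [Fintype α] [Fintype β] [DecidableEq M]

theorem hammingNorm_prod_eq_sum [Zero M] (x : α × β → M) :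
    hammingNorm x = ∑ b, hammingNorm fun a => x (a, b) := by
  simp only [hammingNorm, card_filter]
  exact Fintype.sum_prod_type_right _

theorem hammingNorm_mul_fst_snd [MulZeroClass M] [NoZeroDivisors M] (a : α → M) (b : β → M) :
    hammingNorm (fun q : α × β => a q.1 * b q.2) = hammingNorm a * hammingNorm b := by
  simp only [hammingNorm, ← card_product]
  congr 1
  ext q
  simp

theorem hammingNorm_le_sub_of_forall_lt {m k : ℕ} [Zero M] {r : Fin m → M}
    (hr : ∀ j : Fin m, (j : ℕ) < k → r j = 0) : hammingNorm r ≤ m - k := by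
  have hsupp : ({j | r j ≠ 0} : Finset (Fin m)) ⊆ ({j | ¬ (j : ℕ) < k} : Finset (Fin m)) := by
    intro j
    simp only [mem_filter, mem_univ, true_and]
    exact fun hj hlt => hj (hr j hlt)
  have hsplit := card_filter_add_card_filter_not (s := univ) fun j : Fin m => (j : ℕ) < k
  rw [Fin.card_filter_val_lt, card_univ, Fintype.card_fin] at hsplit
  have hcard := card_le_card hsupp
  unfold hammingNorm
  omega

end HammingNorm

section MinDist

variable {ι : Type*} [Fintype ι] [DecidableEq F] {C : Submodule F (ι → F)}

theorem minDist_le_hammingNorm {x : ι → F} (hx : x ∈ C) (hx0 : x ≠ 0) :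
    minDist C ≤ hammingNorm x :=
  Nat.sInf_le (show hammingNorm x ∈ _ from ⟨x, hx, hx0, rfl⟩)

theorem exists_hammingNorm_eq_minDist (hC : C ≠ ⊥) :
    ∃ x ∈ C, x ≠ 0 ∧ hammingNorm x = minDist C := by
  obtain ⟨x, hx, hx0⟩ := (Submodule.ne_bot_iff C).mp hC
  exact Nat.sInf_mem (s := {d | ∃ x ∈ C, x ≠ 0 ∧ hammingNorm x = d}) ⟨_, x, hx, hx0, rfl⟩

end MinDist

theorem Fin.exists_last_ne_zero {M : Type*} [Zero M] {s : ℕ} {c : Fin s → M} (hc : c ≠ 0) :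
    ∃ t, c t ≠ 0 ∧ ∀ i, t < i → c i = 0 := by
  classical
  obtain ⟨i, hi⟩ := Function.ne_iff.mp hc
  obtain ⟨t, ht, hmax⟩ := exists_max_image {i | c i ≠ 0} id ⟨i, by simpa using hi⟩
  refine ⟨t, (mem_filter.mp ht).2, fun i hti => ?_⟩
  by_contra hi
  exact (hmax i (by simpa using hi)).not_gt hti

section NSC

variable [DecidableEq F] {s m : ℕ} {A : Matrix (Fin s) (Fin m) F}

/-- `t + 1` columns where `u ᵥ* A` vanishes would carry a `(t + 1) × (t + 1)` minor of `A` on its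
first `t + 1` rows with the nonzero vector `u` in its left kernel. -/
theorem NSC.sub_le_hammingNorm_vecMul (hA : NSC A) {u : Fin s → F} (hu : u ≠ 0) {t : Fin s}
    (ht : ∀ i, t < i → u i = 0) : m - t ≤ hammingNorm (u ᵥ* A) := by
  have hzeros : #{j | (u ᵥ* A) j = 0} ≤ t := by
    by_contra! hlt
    have hts : (t : ℕ) + 1 ≤ s := t.isLt
    set e := orderEmbOfCardLe {j | (u ᵥ* A) j = 0} hlt
    let v : Fin (t + 1) → F := fun a => u (Fin.castLE hts a)
    have hv : v ᵥ* of (fun a b => A (Fin.castLE hts a) (e b)) = 0 := by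
      funext b
      rw [Pi.zero_apply, ← (mem_filter.mp (orderEmbOfCardLe_mem _ hlt b)).2]
      refine Fintype.sum_of_injective _ (Fin.castLE_injective hts) _ _ (fun i hi => ?_) fun _ => rfl
      refine mul_eq_zero_of_left (ht i (lt_of_not_ge fun hit => hi ⟨⟨i, ?_⟩, rfl⟩)) _
      omega
    have hv0 := eq_zero_of_vecMul_eq_zero (hA _ hts e e.strictMono) hv
    refine hu (funext fun i => ?_)
    rcases lt_or_ge t i with hti | hit
    · exact ht i hti
    · exact congrFun hv0 ⟨i, by omega⟩
  have hsplit := card_filter_add_card_filter_not (s := univ) fun j => (u ᵥ* A) j = 0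
  rw [card_univ, Fintype.card_fin] at hsplit
  simp only [hammingNorm, ne_eq]
  omega

theorem NSC.sub_le_hammingNorm_row (hA : NSC A) (i : Fin s) : m - i ≤ hammingNorm (A i) := by
  have hsingle := hA.sub_le_hammingNorm_vecMul (Pi.single_ne_zero_iff.mpr one_ne_zero) (t := i)
    fun j hij => Pi.single_eq_of_ne hij.ne' 1
  rwa [single_one_vecMul] at hsingle

theorem NSC.sub_mul_hammingNorm_le {α : Type*} [Fintype α] (hA : NSC A) {c : Fin s → α → F}
    {t : Fin s} (ht : ∀ i, t < i → c i = 0) :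
    (m - t) * hammingNorm (c t) ≤ hammingNorm fun q : Fin m × α => ∑ i, A i q.1 * c i q.2 := by
  have hcol : ∀ p, c t p ≠ 0 → m - t ≤ hammingNorm fun j => ∑ i, A i j * c i p := by
    intro p hp
    have hvecMul : (fun j => ∑ i, A i j * c i p) = (fun i => c i p) ᵥ* A :=
      funext fun j => by simp only [vecMul, dotProduct, mul_comm]
    rw [hvecMul]
    exact hA.sub_le_hammingNorm_vecMul (u := fun i => c i p) (t := t) (Function.ne_iff.mpr ⟨t, hp⟩)
      fun i hi => congrFun (ht i hi) p
  rw [hammingNorm_prod_eq_sum]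
  calc (m - t) * hammingNorm (c t) = ∑ p ∈ {p | c t p ≠ 0}, (m - t) := by
        simp [hammingNorm, mul_comm]
    _ ≤ ∑ p ∈ {p | c t p ≠ 0}, hammingNorm fun j => ∑ i, A i j * c i p :=
        sum_le_sum fun p hp => hcol p (mem_filter.mp hp).2
    _ ≤ _ := sum_le_sum_of_subset (filter_subset _ _)

end NSC

theorem single_mem_matrixProductCode {s m n : ℕ} (A : Matrix (Fin s) (Fin m) F)
    (C : Fin s → Submodule F (Fin n → F)) {i : Fin s} {c : Fin n → F} (hc : c ∈ C i) :
    (fun q : Fin m × Fin n => A i q.1 * c q.2) ∈ matrixProductCode A C := by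
  classical
  refine ⟨Pi.single i c, fun j => ?_, ?_⟩
  · rcases eq_or_ne j i with rfl | hj
    · simpa using hc
    · simp [hj]
  · funext q
    simp [Pi.single_apply, ite_apply]

theorem stmt2_general {F : Type*} [Field F] [DecidableEq F]
    {s m n : ℕ} (hsm : s ≤ m) (A : Matrix (Fin s) (Fin m) F)
    (hNSC : NSC A)
    (hUT : ∀ (i : Fin s) (j : Fin m), (j : ℕ) < (i : ℕ) → A i j = 0)
    (C : Fin s → Submodule F (Fin n → F)) (d : Fin s → ℕ)
    (hC : ∀ i, C i ≠ ⊥)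
    (hd : ∀ i, minDist (C i) = d i) :
    minDist (matrixProductCode A C)
      = sInf {v | ∃ i : Fin s, v = (m - (i : ℕ)) * d i} := by
  apply csInf_eq_csInf_of_forall_exists_le
  · rintro _ ⟨_, ⟨c, hc, rfl⟩, hx0, rfl⟩
    have hc0 : c ≠ 0 := by
      rintro rfl
      exact hx0 (funext fun q => by simp)
    obtain ⟨t, hct, ht⟩ := Fin.exists_last_ne_zero hc0
    refine ⟨_, ⟨t, rfl⟩, ?_⟩
    calc (m - t) * d t ≤ (m - t) * hammingNorm (c t) :=
          Nat.mul_le_mul_left _ (hd t ▸ minDist_le_hammingNorm (hc t) hct)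
      _ ≤ _ := hNSC.sub_mul_hammingNorm_le ht
  · rintro _ ⟨i, rfl⟩
    obtain ⟨c, hc, hc0, hcd⟩ := exists_hammingNorm_eq_minDist (hC i)
    have hrow : 0 < hammingNorm (A i) :=
      (Nat.sub_pos_of_lt (i.isLt.trans_le hsm)).trans_le (hNSC.sub_le_hammingNorm_row i)
    refine ⟨_, ⟨_, single_mem_matrixProductCode A C hc, ?_, rfl⟩, ?_⟩
    · rw [← hammingNorm_pos_iff, hammingNorm_mul_fst_snd]
      exact Nat.mul_pos hrow (hammingNorm_pos_iff.mpr hc0)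
    · rw [hammingNorm_mul_fst_snd, hcd, hd]
      exact Nat.mul_le_mul_right _ (hammingNorm_le_sub_of_forall_lt (hUT i))

theorem stmt2 {F : Type*} [Field F] [Fintype F] [DecidableEq F]
    {s m n : ℕ} (hsm : s ≤ m) (A : Matrix (Fin s) (Fin m) F)
    (hNSC : NSC A)
    (hUT : ∀ (i : Fin s) (j : Fin m), (j : ℕ) < (i : ℕ) → A i j = 0)
    (C : Fin s → Submodule F (Fin n → F)) (k d : Fin s → ℕ)
    (hk : ∀ i, Module.finrank F (C i) = k i)
    (hC : ∀ i, C i ≠ ⊥)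
    (hd : ∀ i, minDist (C i) = d i) :
    minDist (matrixProductCode A C)
      = sInf {v | ∃ i : Fin s, v = (m - (i : ℕ)) * d i} :=
  stmt2_general hsm A hNSC hUT C d hC hd
end

section
/- Let l be a prime power and let g(x) be the generator polynomial of a cyclic code C of length n over F_{l^2}. Then C is a Hermitian LCD code (i.e., LCD with respect to the Hermitian inner product) if and only if g(x) is conjugate-self-reciprocal (g(x) = g^⊥(x)) and every monic irreducible factor of g(x) has the same multiplicity in g(x) as in x^n − 1. -/
open Polynomial Matrix Finset

variable {F : Type*} [Field F]

/-!
Let `σ` be the ring endomorphism `x ↦ x ^ l` (`l` is a power of the characteristic) and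
`g * h = X ^ n - 1`. Reading words as polynomials of degree `< n`, the Hermitian product of `a` and
`b` is the coefficient of `X ^ (n - 1)` in `a * reflect (n - 1) (b.map σ)`. Since reflection is
multiplicative, `a` is orthogonal to the code `(g)` iff the coefficients of `a * G` in degrees
`deg g, …, n - 1` vanish, where `G = g.reverse.map σ`. As `G ∣ X ^ n - 1`, for `a = g * B` this
means `X ^ n - 1 ∣ g * B * G`, i.e. `h ∣ B * G`; so the code is Hermitian LCD iff `h` is coprime to
`G`, an associate of `g^⊥`. Then `g^⊥ ∣ X ^ n - 1 = g * h` forces `g^⊥ ∣ g`, so `g = g^⊥` (both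
monic of the same degree), and `IsCoprime h g` is exactly the multiplicity condition.
-/

noncomputable def polyOf (n : ℕ) (a : Fin n → F) : F[X] :=
  ∑ i : Fin n, C (a i) * X ^ (i : ℕ)

section Words

variable {n : ℕ}

theorem mem_cyclicCode_iff {g : F[X]} {c : Fin n → F} : c ∈ cyclicCode n g ↔ g ∣ polyOf n c :=
  Iff.rfl

theorem coeff_polyOf (a : Fin n → F) (k : ℕ) :
    (polyOf n a).coeff k = if h : k < n then a ⟨k, h⟩ else 0 := by
  simp only [polyOf, finsetSum_coeff, coeff_C_mul_X_pow]
  split_ifs with h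
  · rw [Finset.sum_eq_single ⟨k, h⟩ (fun i _ hi => if_neg fun hk => hi (Fin.ext hk.symm))
      (by simp), if_pos rfl]
  · exact Finset.sum_eq_zero fun i _ => if_neg fun hk => h (by omega)

@[simp]
theorem coeff_polyOf_val (a : Fin n → F) (i : Fin n) : (polyOf n a).coeff i = a i := by
  simp [coeff_polyOf]

theorem natDegree_polyOf_lt (hn : 0 < n) (a : Fin n → F) : (polyOf n a).natDegree < n := by
  have : (polyOf n a).natDegree ≤ n - 1 := natDegree_le_iff_coeff_eq_zero.2 fun k hk => by
    rw [coeff_polyOf, dif_neg (by omega)]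
  omega

theorem polyOf_coeff {P : F[X]} (hP : P.natDegree < n) : polyOf n (fun i => P.coeff i) = P := by
  ext k
  rw [coeff_polyOf]
  split_ifs with h
  · rfl
  · exact (coeff_eq_zero_of_natDegree_lt (by omega)).symm

theorem polyOf_eq_zero_iff {a : Fin n → F} : polyOf n a = 0 ↔ a = 0 := by
  refine ⟨fun h => funext fun i => ?_, fun h => by simp [h, polyOf]⟩
  simpa using congrArg (coeff · i) h

end Words

theorem coeff_mul_reflect {R : Type*} [Semiring R] (P Q : R[X]) (N : ℕ) :
    (P * reflect N Q).coeff N = ∑ i ∈ range (N + 1), P.coeff i * Q.coeff i := by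
  rw [coeff_mul, Nat.sum_antidiagonal_eq_sum_range_succ_mk]
  refine Finset.sum_congr rfl fun i hi => ?_
  rw [coeff_reflect, revAt_le (Nat.sub_le N i),
    Nat.sub_sub_self (by simpa [Nat.lt_succ_iff] using hi)]

theorem coeff_mul_eq_zero_of_coeff_eq_zero {R : Type*} [Semiring R] {P Q : R[X]} {N m : ℕ}
    (hQ : Q.natDegree ≤ m) (hP : ∀ i, N - m ≤ i → i ≤ N → P.coeff i = 0) :
    (P * Q).coeff N = 0 := by
  rw [coeff_mul]
  refine Finset.sum_eq_zero fun ⟨i, j⟩ hij => ?_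
  rw [HasAntidiagonal.mem_antidiagonal] at hij
  dsimp only at hij ⊢
  by_cases hj : j ≤ m
  · rw [hP i (by omega) (by omega), zero_mul]
  · rw [coeff_eq_zero_of_natDegree_lt (p := Q) (by omega), mul_zero]

section XPowSubOne

variable {n : ℕ}

theorem monic_X_pow_sub_one (hn : 0 < n) : (X ^ n - 1 : F[X]).Monic := by
  simpa using monic_X_pow_sub_C (1 : F) hn.ne'

theorem degree_X_pow_sub_one (hn : 0 < n) : (X ^ n - 1 : F[X]).degree = n := by
  simpa using degree_X_pow_sub_C (R := F) hn 1

theorem X_pow_sub_one_dvd_iff_coeff_eq_zero (hn : 0 < n) {G P : F[X]} (hG : G ∣ X ^ n - 1)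
    (hGP : G ∣ P) (hP : P.natDegree < n + G.natDegree) :
    X ^ n - 1 ∣ P ↔ ∀ k, G.natDegree ≤ k → k < n → P.coeff k = 0 := by
  have hM := monic_X_pow_sub_one (F := F) hn
  have hG0 : G ≠ 0 := ne_zero_of_dvd_ne_zero hM.ne_zero hG
  set R := P %ₘ (X ^ n - 1)
  set S := P /ₘ (X ^ n - 1)
  have hRdeg : R.degree < n := degree_X_pow_sub_one (F := F) hn ▸ degree_modByMonic_lt P hM
  have hGR : G ∣ R := by
    rw [show R = P - (X ^ n - 1) * S from eq_sub_of_add_eq (modByMonic_add_div P (X ^ n - 1))]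
    exact dvd_sub hGP (hG.mul_right S)
  have hS : ∀ k, G.natDegree ≤ k → S.coeff k = 0 := by
    intro k hk
    by_cases hPn : P.natDegree < n
    · have hS0 : S = 0 := (divByMonic_eq_zero_iff hM).2 <| by
        rw [degree_X_pow_sub_one hn]
        exact degree_le_natDegree.trans_lt (by exact_mod_cast hPn)
      rw [hS0, coeff_zero]
    · exact coeff_eq_zero_of_natDegree_lt (by rw [natDegree_divByMonic P hM,
        natDegree_eq_of_degree_eq_some (degree_X_pow_sub_one hn)]; omega)
  -- `P = R + X ^ n * S - S` with `deg S < deg G`, so `R` and `P` agree in degrees `[deg G, n)`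
  have hRP : ∀ k, G.natDegree ≤ k → k < n → R.coeff k = P.coeff k := by
    intro k hk hkn
    conv_rhs => rw [← modByMonic_add_div P (X ^ n - 1)]
    rw [coeff_add, sub_mul, one_mul, coeff_sub, coeff_X_pow_mul', if_neg (by omega), hS k hk,
      sub_zero, add_zero]
  have hR0 : R = 0 ↔ R.degree < G.natDegree :=
    ⟨fun h => by simp [h, bot_lt_iff_ne_bot],
      fun h => eq_zero_of_dvd_of_degree_lt hGR (by rwa [degree_eq_natDegree hG0])⟩
  rw [← modByMonic_eq_zero_iff_dvd hM, hR0, degree_lt_iff_coeff_zero]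
  constructor
  · intro h k hk hkn
    rw [← hRP k hk hkn, h k hk]
  · intro h k hk
    by_cases hkn : k < n
    · rw [hRP k hk hkn, h k hk hkn]
    · exact coeff_eq_zero_of_degree_lt (hRdeg.trans_le (by exact_mod_cast not_lt.1 hkn))

theorem coeff_zero_ne_zero_of_dvd_X_pow_sub_one (hn : 0 < n) {g : F[X]} (hg : g ∣ X ^ n - 1) :
    g.coeff 0 ≠ 0 := fun h0 => by
  simpa [X_dvd_iff, hn.ne] using (X_dvd_iff.2 h0).trans hg

end XPowSubOne

section Reverse

variable {n : ℕ}

theorem natDegree_map_reverse (σ : F →+* F) {f : F[X]} (hf : f.coeff 0 ≠ 0) :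
    (f.reverse.map σ).natDegree = f.natDegree := by
  rw [natDegree_map, reverse_natDegree, natTrailingDegree_eq_zero.2 (Or.inr hf), Nat.sub_zero]

theorem leadingCoeff_map_reverse (σ : F →+* F) {f : F[X]} (hf : f.coeff 0 ≠ 0) :
    (f.reverse.map σ).leadingCoeff = σ (f.coeff 0) := by
  rw [leadingCoeff_map, reverse_leadingCoeff, trailingCoeff,
    natTrailingDegree_eq_zero.2 (Or.inr hf)]

theorem map_reverse_X_pow_sub_one (σ : F →+* F) :
    (X ^ n - 1 : F[X]).reverse.map σ = -(X ^ n - 1) := by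
  rw [show (X ^ n - 1 : F[X]) = X ^ n * C 1 + C (-1) by simp [sub_eq_add_neg], reverse_add_C,
    reverse_X_pow_mul, reverse_C]
  simp

theorem map_reverse_dvd_X_pow_sub_one (σ : F →+* F) {g : F[X]}
    (hg : g ∣ X ^ n - 1) : g.reverse.map σ ∣ X ^ n - 1 := by
  obtain ⟨h, hgh⟩ := hg
  refine ⟨-h.reverse.map σ, ?_⟩
  rw [mul_neg, ← Polynomial.map_mul, ← reverse_mul_of_domain, ← hgh, map_reverse_X_pow_sub_one σ,
    neg_neg]

end Reverse

section Coprime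

theorem exists_monic_irreducible_dvd_of_not_isCoprime {a b : F[X]} (h : ¬IsCoprime a b) :
    ∃ p : F[X], p.Monic ∧ Irreducible p ∧ p ∣ a ∧ p ∣ b := by
  classical
  obtain ⟨p, hpm, hpi, hp⟩ :=
    exists_monic_irreducible_factor _ (mt EuclideanDomain.gcd_isUnit_iff.1 h)
  exact ⟨p, hpm, hpi, hp.trans (EuclideanDomain.gcd_dvd_left a b),
    hp.trans (EuclideanDomain.gcd_dvd_right a b)⟩

theorem isCoprime_iff_forall_dvd_mul {h G : F[X]} (hh : h ≠ 0) :
    IsCoprime h G ↔ ∀ B : F[X], B.natDegree < h.natDegree → h ∣ B * G → B = 0 := by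
  constructor
  · intro hco B hB hdvd
    by_contra hB0
    exact (natDegree_le_of_dvd (hco.dvd_of_dvd_mul_right hdvd) hB0).not_gt hB
  · intro H
    by_contra hco
    obtain ⟨p, -, hpi, ⟨B, rfl⟩, ⟨c, rfl⟩⟩ := exists_monic_irreducible_dvd_of_not_isCoprime hco
    have hB0 : B ≠ 0 := right_ne_zero_of_mul hh
    refine hB0 (H B ?_ ⟨c, by ring⟩)
    rw [natDegree_mul hpi.ne_zero hB0]
    have := hpi.natDegree_pos
    omega

theorem isCoprime_iff_forall_pow_dvd {g h : F[X]} (hg : g ≠ 0) :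
    IsCoprime h g ↔ ∀ p : F[X], p.Monic → Irreducible p → p ∣ g →
      ∀ e : ℕ, p ^ e ∣ g ↔ p ^ e ∣ g * h := by
  constructor
  · intro hco p _ hpi hpg e
    have hph : ¬p ∣ h := fun hph => hpi.not_isUnit (hco.isUnit_of_dvd' hph hpg)
    exact ⟨fun hpe => hpe.mul_right h, hpi.prime.pow_dvd_of_dvd_mul_right e hph⟩
  · intro H
    by_contra hco
    obtain ⟨p, hpm, hpi, hph, hpg⟩ := exists_monic_irreducible_dvd_of_not_isCoprime hco
    obtain ⟨e, a, hpa, rfl⟩ := WfDvdMonoid.max_power_factor hg hpi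
    have hdvd : p ^ e * p ∣ p ^ e * a := by
      rw [← pow_succ, H p hpm hpi hpg (e + 1), pow_succ, mul_assoc]
      exact mul_dvd_mul_left _ (dvd_mul_of_dvd_right hph a)
    exact hpa ((mul_dvd_mul_iff_left (pow_ne_zero e hpi.ne_zero)).1 hdvd)

end Coprime

theorem exists_ringHom_eq_pow [Fintype F] {l : ℕ} (hl : IsPrimePow l)
    (hcard : Fintype.card F = l ^ 2) :
    ∃ σ : F →+* F, ∀ x, σ x = x ^ l := by
  obtain ⟨p, k, hp, -, rfl⟩ := hl
  have hp : p.Prime := Nat.prime_iff.2 hp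
  have hchar : ringChar F ∣ (p ^ k) ^ 2 :=
    ringChar.dvd (by rw [← hcard]; exact FiniteField.cast_card_eq_zero F)
  have hprime : (ringChar F).Prime := CharP.char_is_prime F (ringChar F)
  have hpF : ringChar F = p :=
    (Nat.prime_dvd_prime_iff_eq hprime hp).1 (hprime.dvd_of_dvd_pow (hprime.dvd_of_dvd_pow hchar))
  have : CharP F p := hpF ▸ ringChar.charP F
  have : Fact p.Prime := ⟨hp⟩
  exact ⟨iterateFrobenius F p k, iterateFrobenius_def p k⟩

section ConjReciprocal

variable {l : ℕ} {σ : F →+* F}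

theorem map_reverse_eq_sum (hσ : ∀ x, σ x = x ^ l) (f : F[X]) :
    f.reverse.map σ = ∑ i ∈ range (f.natDegree + 1), C (f.coeff (f.natDegree - i) ^ l) * X ^ i := by
  ext k
  simp only [coeff_map, coeff_reverse, finsetSum_coeff, coeff_C_mul_X_pow, Finset.sum_ite_eq,
    Finset.mem_range, ← hσ]
  split_ifs with hk
  · rw [revAt_le (by omega)]
  · rw [revAt_eq_self_of_lt (by omega), coeff_eq_zero_of_natDegree_lt (by omega), map_zero]

theorem map_reverse_eq_C_mul_conjReciprocal (hσ : ∀ x, σ x = x ^ l) {f : F[X]}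
    (hf : f.coeff 0 ≠ 0) : f.reverse.map σ = C (σ (f.coeff 0)) * conjReciprocal l f := by
  rw [conjReciprocal, ← map_reverse_eq_sum hσ, ← hσ, ← mul_assoc, ← C_mul,
    mul_inv_cancel₀ ((map_ne_zero σ).2 hf), C_1, one_mul]

theorem monic_conjReciprocal (hσ : ∀ x, σ x = x ^ l) {f : F[X]} (hf : f.coeff 0 ≠ 0) :
    (conjReciprocal l f).Monic := by
  have h := congrArg leadingCoeff (map_reverse_eq_C_mul_conjReciprocal hσ hf)
  rw [leadingCoeff_map_reverse σ hf, leadingCoeff_mul, leadingCoeff_C] at h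
  exact (mul_eq_left₀ ((map_ne_zero σ).2 hf)).1 h.symm

theorem natDegree_conjReciprocal (hσ : ∀ x, σ x = x ^ l) {f : F[X]} (hf : f.coeff 0 ≠ 0) :
    (conjReciprocal l f).natDegree = f.natDegree := by
  rw [← natDegree_map_reverse σ hf, map_reverse_eq_C_mul_conjReciprocal hσ hf,
    natDegree_C_mul ((map_ne_zero σ).2 hf)]

theorem eq_conjReciprocal_of_isCoprime (hσ : ∀ x, σ x = x ^ l) {n : ℕ} {g h : F[X]}
    (hg : g.Monic) (hg0 : g.coeff 0 ≠ 0) (hgh : g * h = X ^ n - 1)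
    (hco : IsCoprime h (conjReciprocal l g)) : g = conjReciprocal l g := by
  have hdvd : conjReciprocal l g ∣ g * h := by
    rw [hgh]
    refine dvd_trans ?_ (map_reverse_dvd_X_pow_sub_one σ ⟨h, hgh.symm⟩)
    rw [map_reverse_eq_C_mul_conjReciprocal hσ hg0]
    exact dvd_mul_left _ _
  refine eq_of_monic_of_dvd_of_natDegree_le (monic_conjReciprocal hσ hg0) hg
    (hco.symm.dvd_of_dvd_mul_right hdvd) ?_
  rw [natDegree_conjReciprocal hσ hg0]

end ConjReciprocal

section HermitianDual

variable {n l : ℕ}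

theorem sum_mul_map_coeff_mul_eq_coeff (σ : F →+* F) (hn : 0 < n) {g Q : F[X]}
    (hdeg : g.natDegree + Q.natDegree < n) (a : Fin n → F) :
    ∑ i, a i * σ ((g * Q).coeff i) =
      (polyOf n a * g.reverse.map σ * reflect (n - 1 - g.natDegree) (Q.map σ)).coeff (n - 1) := by
  have hreflect : g.reverse.map σ * reflect (n - 1 - g.natDegree) (Q.map σ) =
      reflect (n - 1) ((g * Q).map σ) := by
    rw [reverse, ← reflect_map, Polynomial.map_mul, ← reflect_mul _ _ (natDegree_map_le)
      (natDegree_map_le.trans (by omega)), Nat.add_sub_cancel' (by omega)]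
  rw [mul_assoc, hreflect, coeff_mul_reflect, Nat.sub_add_cancel hn, ← Fin.sum_univ_eq_sum_range]
  simp only [coeff_polyOf_val, coeff_map]

theorem mem_hermitianDual_cyclicCode_iff {σ : F →+* F} (hσ : ∀ x, σ x = x ^ l) (hn : 0 < n)
    (g : F[X]) (a : Fin n → F) :
    a ∈ hermitianDual l (cyclicCode n g) ↔
      ∀ k, g.natDegree ≤ k → k < n → (polyOf n a * g.reverse.map σ).coeff k = 0 := by
  have hdual : a ∈ hermitianDual l (cyclicCode n g) ↔
      ∀ b ∈ cyclicCode n g, ∑ i, a i * σ (b i) = 0 := by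
    simp only [hσ]; rfl
  rw [hdual]
  constructor
  · intro ha k hgk hkn
    -- testing against the codeword `g * X ^ (k - deg g)` isolates the coefficient of `X ^ k`
    have hdeg : g.natDegree + (X ^ (k - g.natDegree) : F[X]).natDegree < n := by
      rw [natDegree_X_pow]; omega
    have hmem : (fun i : Fin n => (g * X ^ (k - g.natDegree)).coeff i) ∈ cyclicCode n g := by
      rw [mem_cyclicCode_iff, polyOf_coeff (natDegree_mul_le.trans_lt hdeg)]
      exact dvd_mul_right _ _
    have hX : reflect (n - 1 - g.natDegree) ((X ^ (k - g.natDegree) : F[X]).map σ) =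
        X ^ (n - 1 - k) := by
      rw [Polynomial.map_pow, map_X, reflect_monomial, revAt_le (by omega)]
      congr 1
      omega
    have := ha _ hmem
    rwa [sum_mul_map_coeff_mul_eq_coeff σ hn hdeg, hX, coeff_mul_X_pow', if_pos (by omega),
      Nat.sub_sub_self (by omega)] at this
  · intro hwin b hbC
    obtain ⟨Q, hQ⟩ := mem_cyclicCode_iff.1 hbC
    have hb : b = fun i : Fin n => (g * Q).coeff i := funext fun i => by rw [← hQ, coeff_polyOf_val]
    by_cases h0 : g * Q = 0
    · simp [hb, h0]
    have hdeg : g.natDegree + Q.natDegree < n := by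
      rw [← natDegree_mul (left_ne_zero_of_mul h0) (right_ne_zero_of_mul h0), ← hQ]
      exact natDegree_polyOf_lt hn b
    rw [hb, sum_mul_map_coeff_mul_eq_coeff σ hn hdeg]
    refine coeff_mul_eq_zero_of_coeff_eq_zero (m := n - 1 - g.natDegree) ?_
      fun i hi hi' => hwin i (by omega) (by omega)
    exact natDegree_reflect_le.trans (max_le le_rfl (natDegree_map_le.trans (by omega)))

end HermitianDual

section HermitianLCD

variable {n l : ℕ} {σ : F →+* F}

theorem coeff_mul_mem_hermitianDual_iff (hσ : ∀ x, σ x = x ^ l) (hn : 0 < n) {g h B : F[X]}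
    (hgh : g * h = X ^ n - 1) (hgB : (g * B).natDegree < n) :
    (fun i : Fin n => (g * B).coeff i) ∈ hermitianDual l (cyclicCode n g) ↔
      h ∣ B * g.reverse.map σ := by
  have hg0 : g.coeff 0 ≠ 0 := coeff_zero_ne_zero_of_dvd_X_pow_sub_one hn ⟨h, hgh.symm⟩
  have hG := map_reverse_dvd_X_pow_sub_one σ ⟨h, hgh.symm⟩
  have hdeg : (g * B * g.reverse.map σ).natDegree < n + (g.reverse.map σ).natDegree :=
    natDegree_mul_le.trans_lt (by omega)
  rw [mem_hermitianDual_cyclicCode_iff hσ hn, polyOf_coeff hgB, ← natDegree_map_reverse σ hg0,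
    ← X_pow_sub_one_dvd_iff_coeff_eq_zero hn hG (dvd_mul_left _ _) hdeg, ← hgh, mul_assoc,
    mul_dvd_mul_iff_left (left_ne_zero_of_mul (hgh ▸ (monic_X_pow_sub_one hn).ne_zero))]

theorem isHermitianLCD_cyclicCode_iff_isCoprime (hσ : ∀ x, σ x = x ^ l) (hn : 0 < n)
    {g h : F[X]} (hgh : g * h = X ^ n - 1) :
    IsHermitianLCD l (cyclicCode n g) ↔ IsCoprime h (g.reverse.map σ) := by
  have hgh0 : g * h ≠ 0 := hgh ▸ (monic_X_pow_sub_one hn).ne_zero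
  have hg0 := left_ne_zero_of_mul hgh0
  have hh0 := right_ne_zero_of_mul hgh0
  have hdeg : g.natDegree + h.natDegree = n := by
    rw [← natDegree_mul hg0 hh0, hgh, natDegree_eq_of_degree_eq_some (degree_X_pow_sub_one hn)]
  rw [isCoprime_iff_forall_dvd_mul hh0, IsHermitianLCD, Submodule.eq_bot_iff]
  constructor
  · intro H B hB hdvd
    have hgB : (g * B).natDegree < n := natDegree_mul_le.trans_lt (by omega)
    have hmem : (fun i : Fin n => (g * B).coeff i) ∈ cyclicCode n g := by
      rw [mem_cyclicCode_iff, polyOf_coeff hgB]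
      exact dvd_mul_right _ _
    have := H _ (Submodule.mem_inf.2 ⟨hmem, (coeff_mul_mem_hermitianDual_iff hσ hn hgh hgB).2 hdvd⟩)
    rw [← polyOf_eq_zero_iff, polyOf_coeff hgB] at this
    exact (mul_eq_zero.1 this).resolve_left hg0
  · intro H a ha
    obtain ⟨haC, haD⟩ := Submodule.mem_inf.1 ha
    obtain ⟨B, hB⟩ := mem_cyclicCode_iff.1 haC
    rw [← polyOf_eq_zero_iff, hB]
    by_contra hgB0
    have hB0 := right_ne_zero_of_mul hgB0
    have hgB : (g * B).natDegree < n := hB ▸ natDegree_polyOf_lt hn a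
    have hBh : B.natDegree < h.natDegree := by
      rw [natDegree_mul hg0 hB0] at hgB
      omega
    have ha' : a = fun i : Fin n => (g * B).coeff i :=
      funext fun i => by rw [← hB, coeff_polyOf_val]
    exact hB0 (H B hBh ((coeff_mul_mem_hermitianDual_iff hσ hn hgh hgB).1 (ha' ▸ haD)))

end HermitianLCD

theorem stmt8 {F : Type*} [Field F] [Fintype F] {l : ℕ} (hl : IsPrimePow l)
    (hcard : Fintype.card F = l ^ 2) {n : ℕ} (hn : 0 < n)
    (g : F[X]) (hg : g.Monic) (hgdvd : g ∣ (Polynomial.X ^ n - 1 : F[X])) :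
    IsHermitianLCD l (cyclicCode n g) ↔
      (g = conjReciprocal l g ∧
        ∀ p : F[X], p.Monic → Irreducible p → p ∣ g →
          ∀ e : ℕ, p ^ e ∣ g ↔ p ^ e ∣ (Polynomial.X ^ n - 1 : F[X])) := by
  obtain ⟨σ, hσ⟩ := exists_ringHom_eq_pow hl hcard
  obtain ⟨h, hgh⟩ := hgdvd
  have hg0 := coeff_zero_ne_zero_of_dvd_X_pow_sub_one hn ⟨h, hgh⟩
  rw [isHermitianLCD_cyclicCode_iff_isCoprime hσ hn hgh.symm,
    map_reverse_eq_C_mul_conjReciprocal hσ hg0,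
    isCoprime_mul_unit_left_right (isUnit_C.2 (map_ne_zero σ |>.2 hg0).isUnit), hgh,
    ← isCoprime_iff_forall_pow_dvd hg.ne_zero]
  constructor
  · intro hco
    have heq := eq_conjReciprocal_of_isCoprime hσ hg hg0 hgh.symm hco
    exact ⟨heq, heq ▸ hco⟩
  · rintro ⟨heq, hco⟩
    rwa [← heq]
end
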